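/- arXiv:math/9905022 — 6 statements merged into one kernel-verified Lean document; each statement's English description precedes it below -/
import Mathlib

section
/- If 0 belongs to the interior of the convex hull of Δ, then the topological interior of Λ equals {x ∈ Λ : ∃ε > 0 such that x ∈ int_εΛ}, i.e. int Λ = ⋃_{ε>0} int_εΛ. -/
/-!
An interior point `x` of `Λ` stays in `Λ` along each of the finitely many short segments
`ε ↦ x + ε • δ`. Conversely, if `x + ε • Δ ⊆ Λ` then by convexity `x + ε • conv Δ ⊆ Λ`, and this
homothetic copy of `conv Δ` has `x` in its interior because `conv Δ` has `0` in its interior.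
-/

open Set Filter Topology Pointwise

section

variable {E : Type*} [AddCommGroup E] [Module ℝ E] [TopologicalSpace E]
  [IsTopologicalAddGroup E] [ContinuousSMul ℝ E]

theorem eventually_forall_add_smul_mem_of_mem_interior {s : Set E} {x : E}
    (hx : x ∈ interior s) (Δ : Finset E) : ∀ᶠ ε in 𝓝 (0 : ℝ), ∀ δ ∈ Δ, x + ε • δ ∈ s := by
  refine (eventually_all_finset Δ).2 fun δ _ => ?_
  have hcont : Continuous fun ε : ℝ => x + ε • δ := by fun_prop
  have hs : s ∈ 𝓝 (x + (0 : ℝ) • δ) := by simpa using mem_interior_iff_mem_nhds.1 hx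
  exact hcont.continuousAt.preimage_mem_nhds hs

theorem exists_pos_forall_add_smul_mem_of_mem_interior {s : Set E} {x : E}
    (hx : x ∈ interior s) (Δ : Finset E) : ∃ ε > (0 : ℝ), ∀ δ ∈ Δ, x + ε • δ ∈ s :=
  ((eventually_forall_add_smul_mem_of_mem_interior hx Δ).filter_mono
    (nhdsWithin_le_nhds (s := Ioi 0)) |>.and self_mem_nhdsWithin).exists.imp
    fun _ h => ⟨h.2, h.1⟩

theorem mem_interior_of_forall_add_smul_mem {s t : Set E} (hs : Convex ℝ s) {x : E} {ε : ℝ}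
    (hε : ε ≠ 0) (h : ∀ δ ∈ t, x + ε • δ ∈ s) (h0 : (0 : E) ∈ interior (convexHull ℝ t)) :
    x ∈ interior s := by
  have hsub : x +ᵥ ε • t ⊆ s := by
    rintro _ ⟨_, ⟨δ, hδ, rfl⟩, rfl⟩
    exact h δ hδ
  have hx : x ∈ x +ᵥ ε • interior (convexHull ℝ t) :=
    ⟨0, ⟨0, h0, smul_zero ε⟩, add_zero x⟩
  rw [← interior_smul₀ hε, ← interior_vadd, ← convexHull_smul, ← convexHull_vadd] at hx
  exact interior_mono (convexHull_min hsub hs) hx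

end

theorem interior_eq_union_eps_interior_general (d : ℕ)
    (Λ : Set (EuclideanSpace ℝ (Fin d))) (hΛ : Convex ℝ Λ)
    (Δ : Finset (EuclideanSpace ℝ (Fin d)))
    (h0 : (0 : EuclideanSpace ℝ (Fin d)) ∈
      interior (convexHull ℝ (Δ : Set (EuclideanSpace ℝ (Fin d))))) :
    interior Λ = {x ∈ Λ | ∃ ε > (0 : ℝ), ∀ δ ∈ Δ, x + ε • δ ∈ Λ} := by
  ext x
  constructor
  · intro hx
    exact ⟨interior_subset hx, exists_pos_forall_add_smul_mem_of_mem_interior hx Δ⟩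
  · rintro ⟨-, ε, hε, hxε⟩
    exact mem_interior_of_forall_add_smul_mem hΛ hε.ne' hxε h0

/-- If 0 belongs to the interior of the convex hull of Δ, then the
topological interior of the convex set Λ equals the union over ε > 0 of the
ε-interiors `int_εΛ = {x ∈ Λ : ∀ δ ∈ Δ, x + εδ ∈ Λ}`. -/
theorem interior_eq_union_eps_interior (d : ℕ) (hd : 1 ≤ d)
    (Λ : Set (EuclideanSpace ℝ (Fin d))) (hΛ : Convex ℝ Λ)
    (Δ : Finset (EuclideanSpace ℝ (Fin d))) (hΔ : Δ.Nonempty)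
    (h0 : (0 : EuclideanSpace ℝ (Fin d)) ∈
      interior (convexHull ℝ (Δ : Set (EuclideanSpace ℝ (Fin d))))) :
    interior Λ = {x ∈ Λ | ∃ ε > (0 : ℝ), ∀ δ ∈ Δ, x + ε • δ ∈ Λ} :=
  interior_eq_union_eps_interior_general d Λ hΛ Δ h0
end

section
/- If the affine hull of the support S equals all of ℝ^d, then Φ is strictly convex on ℝ^d: for all v ≠ v′ in ℝ^d and all 0 < λ < 1, Φ(λv + (1−λ)v′) < λΦ(v) + (1−λ)Φ(v′). -/
open scoped RealInnerProductSpace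

/-!
Writing `Z(v) = Σ_{δ∈Δ} w(δ) e^{⟨v,δ⟩}`, the terms of `Z(a x + b y)` are
`(w(δ) e^{⟨x,δ⟩})^a (w(δ) e^{⟨y,δ⟩})^b`, so Hölder's inequality gives `Z(a x + b y) ≤ Z(x)^a Z(y)^b`,
which is convexity of `Φ = log Z`. Equality forces the tilted weights `ν^x` and `ν^y` to agree on `S`,
i.e. `⟨x - y, δ⟩ = Φ(x) - Φ(y)` for all `δ ∈ S`; a linear functional that is constant on a set
affinely spanning `ℝ^d` vanishes, so `x = y`.
-/

/-- The logarithmic moment generating function Φ(v) = log Σ_{δ∈Δ} w(δ) e^{⟨v,δ⟩}. -/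
noncomputable def logMGF {d : ℕ} (Δ : Finset (EuclideanSpace ℝ (Fin d)))
    (w : EuclideanSpace ℝ (Fin d) → ℝ) (v : EuclideanSpace ℝ (Fin d)) : ℝ :=
  Real.log (∑ δ ∈ Δ, w δ * Real.exp ⟪v, δ⟫)

/-- Hölder's inequality with exponents `1/a`, `1/b`, in its strict form. -/
theorem sum_rpow_mul_rpow_lt_of_exists_ne {ι : Type*} {s : Finset ι} {f g : ι → ℝ} {a b : ℝ}
    (hf : ∀ i ∈ s, 0 ≤ f i) (hg : ∀ i ∈ s, 0 ≤ g i)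
    (hA : 0 < ∑ i ∈ s, f i) (hB : 0 < ∑ i ∈ s, g i) (ha : 0 < a) (hb : 0 < b) (hab : a + b = 1)
    (hne : ∃ i ∈ s, f i / ∑ j ∈ s, f j ≠ g i / ∑ j ∈ s, g j) :
    ∑ i ∈ s, f i ^ a * g i ^ b < (∑ i ∈ s, f i) ^ a * (∑ i ∈ s, g i) ^ b := by
  set A := ∑ i ∈ s, f i
  set B := ∑ i ∈ s, g i
  have hAB : 0 < A ^ a * B ^ b := by positivity
  have hp : ∀ i ∈ s, 0 ≤ f i / A := fun i hi ↦ div_nonneg (hf i hi) hA.le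
  have hq : ∀ i ∈ s, 0 ≤ g i / B := fun i hi ↦ div_nonneg (hg i hi) hB.le
  have hsplit : ∀ i ∈ s, f i ^ a * g i ^ b = A ^ a * B ^ b * ((f i / A) ^ a * (g i / B) ^ b) := by
    intro i hi
    rw [Real.div_rpow (hf i hi) hA.le, Real.div_rpow (hg i hi) hB.le]
    field_simp
  calc ∑ i ∈ s, f i ^ a * g i ^ b
      = A ^ a * B ^ b * ∑ i ∈ s, (f i / A) ^ a * (g i / B) ^ b := by
        rw [Finset.mul_sum]; exact Finset.sum_congr rfl hsplit
    _ < A ^ a * B ^ b * ∑ i ∈ s, (a * (f i / A) + b * (g i / B)) := by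
        refine mul_lt_mul_of_pos_left (Finset.sum_lt_sum (fun i hi ↦ ?_) ?_) hAB
        · exact Real.geom_mean_le_arith_mean2_weighted ha.le hb.le (hp i hi) (hq i hi) hab
        · obtain ⟨i, hi, hne⟩ := hne
          exact ⟨i, hi, (Real.geom_mean_lt_arith_mean2_weighted_iff_of_pos ha hb
            (hp i hi) (hq i hi) hab).2 hne⟩
    _ = A ^ a * B ^ b := by
        rw [Finset.sum_add_distrib, ← Finset.mul_sum, ← Finset.mul_sum, ← Finset.sum_div,
          ← Finset.sum_div, div_self hA.ne', div_self hB.ne', mul_one, mul_one, hab, mul_one]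

theorem eq_zero_of_forall_inner_eq_of_affineSpan_eq_top {V : Type*} [NormedAddCommGroup V]
    [InnerProductSpace ℝ V] {S : Set V} (hS : affineSpan ℝ S = ⊤) {u : V} {c : ℝ}
    (h : ∀ δ ∈ S, ⟪u, δ⟫ = c) : u = 0 := by
  have hspan : vectorSpan ℝ S ≤ LinearMap.ker (innerₛₗ ℝ u) := by
    rw [vectorSpan_def, Submodule.span_le]
    rintro _ ⟨p, hp, q, hq, rfl⟩
    simp [inner_sub_right, h p hp, h q hq]
  rw [← direction_affineSpan, hS, AffineSubspace.direction_top] at hspan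
  exact inner_self_eq_zero.1 (hspan Submodule.mem_top)

section LogMGF

variable {d : ℕ} (Δ : Finset (EuclideanSpace ℝ (Fin d))) (w : EuclideanSpace ℝ (Fin d) → ℝ)

noncomputable def partitionFn (v : EuclideanSpace ℝ (Fin d)) : ℝ :=
  ∑ δ ∈ Δ, w δ * Real.exp ⟪v, δ⟫

/-- The tilted probability weights `ν^v`. -/
noncomputable def tiltedWeight (v δ : EuclideanSpace ℝ (Fin d)) : ℝ :=
  w δ * Real.exp ⟪v, δ⟫ / partitionFn Δ w v

variable {Δ w}

theorem exists_pos_weight_of_affineSpan_eq_top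
    (haff : affineSpan ℝ {δ : EuclideanSpace ℝ (Fin d) | δ ∈ Δ ∧ 0 < w δ} = ⊤) :
    ∃ δ ∈ Δ, 0 < w δ := by
  obtain ⟨δ, hδ, hwδ⟩ := (affineSpan_nonempty ℝ).1
    (by rw [haff, AffineSubspace.top_coe]; exact Set.univ_nonempty)
  exact ⟨δ, hδ, hwδ⟩

theorem partitionFn_pos (hw : ∀ δ ∈ Δ, 0 ≤ w δ) (hS : ∃ δ ∈ Δ, 0 < w δ)
    (v : EuclideanSpace ℝ (Fin d)) : 0 < partitionFn Δ w v := by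
  obtain ⟨δ, hδ, hwδ⟩ := hS
  exact Finset.sum_pos' (fun δ hδ ↦ mul_nonneg (hw δ hδ) (Real.exp_pos _).le)
    ⟨δ, hδ, mul_pos hwδ (Real.exp_pos _)⟩

theorem log_tiltedWeight (hw : ∀ δ ∈ Δ, 0 ≤ w δ) (hS : ∃ δ ∈ Δ, 0 < w δ)
    {v δ : EuclideanSpace ℝ (Fin d)} (hδ : 0 < w δ) :
    Real.log (tiltedWeight Δ w v δ) = Real.log (w δ) + ⟪v, δ⟫ - logMGF Δ w v := by
  rw [tiltedWeight, Real.log_div (by positivity) (partitionFn_pos hw hS v).ne',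
    Real.log_mul hδ.ne' (Real.exp_pos _).ne', Real.log_exp, logMGF, partitionFn]

theorem eq_of_forall_tiltedWeight_eq (hw : ∀ δ ∈ Δ, 0 ≤ w δ)
    (haff : affineSpan ℝ {δ : EuclideanSpace ℝ (Fin d) | δ ∈ Δ ∧ 0 < w δ} = ⊤)
    {x y : EuclideanSpace ℝ (Fin d)}
    (h : ∀ δ ∈ Δ, 0 < w δ → tiltedWeight Δ w x δ = tiltedWeight Δ w y δ) : x = y := by
  have hS := exists_pos_weight_of_affineSpan_eq_top haff
  refine sub_eq_zero.1 (eq_zero_of_forall_inner_eq_of_affineSpan_eq_top haff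
    (c := logMGF Δ w x - logMGF Δ w y) ?_)
  rintro δ ⟨hδ, hwδ⟩
  have hlog := congrArg Real.log (h δ hδ hwδ)
  rw [log_tiltedWeight hw hS hwδ, log_tiltedWeight hw hS hwδ] at hlog
  rw [inner_sub_left]
  linarith

theorem partitionFn_add_smul_eq_sum_rpow_mul_rpow (hw : ∀ δ ∈ Δ, 0 ≤ w δ)
    (x y : EuclideanSpace ℝ (Fin d)) {a b : ℝ} (hab : a + b = 1) :
    partitionFn Δ w (a • x + b • y) =
      ∑ δ ∈ Δ, (w δ * Real.exp ⟪x, δ⟫) ^ a * (w δ * Real.exp ⟪y, δ⟫) ^ b := by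
  refine Finset.sum_congr rfl fun δ hδ ↦ ?_
  rw [Real.mul_rpow (hw δ hδ) (Real.exp_pos _).le, Real.mul_rpow (hw δ hδ) (Real.exp_pos _).le,
    ← Real.exp_mul, ← Real.exp_mul, mul_mul_mul_comm, ← Real.rpow_add' (hw δ hδ) (by simp [hab]),
    hab, Real.rpow_one, ← Real.exp_add, inner_add_left, real_inner_smul_left,
    real_inner_smul_left, mul_comm a, mul_comm b]

theorem partitionFn_add_smul_lt (hw : ∀ δ ∈ Δ, 0 ≤ w δ)
    (haff : affineSpan ℝ {δ : EuclideanSpace ℝ (Fin d) | δ ∈ Δ ∧ 0 < w δ} = ⊤)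
    {x y : EuclideanSpace ℝ (Fin d)} (hxy : x ≠ y) {a b : ℝ} (ha : 0 < a) (hb : 0 < b)
    (hab : a + b = 1) :
    partitionFn Δ w (a • x + b • y) < partitionFn Δ w x ^ a * partitionFn Δ w y ^ b := by
  have hS := exists_pos_weight_of_affineSpan_eq_top haff
  have hne : ∃ δ ∈ Δ, tiltedWeight Δ w x δ ≠ tiltedWeight Δ w y δ := by
    by_contra! h
    exact hxy (eq_of_forall_tiltedWeight_eq hw haff fun δ hδ _ ↦ h δ hδ)
  rw [partitionFn_add_smul_eq_sum_rpow_mul_rpow hw x y hab]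
  exact sum_rpow_mul_rpow_lt_of_exists_ne
    (fun δ hδ ↦ mul_nonneg (hw δ hδ) (Real.exp_pos _).le)
    (fun δ hδ ↦ mul_nonneg (hw δ hδ) (Real.exp_pos _).le)
    (partitionFn_pos hw hS x) (partitionFn_pos hw hS y) ha hb hab hne

end LogMGF

theorem logMGF_strictConvexOn_general (d : ℕ)
    (Δ : Finset (EuclideanSpace ℝ (Fin d)))
    (w : EuclideanSpace ℝ (Fin d) → ℝ) (hw : ∀ δ ∈ Δ, 0 ≤ w δ)
    (haff : affineSpan ℝ {δ : EuclideanSpace ℝ (Fin d) | δ ∈ Δ ∧ 0 < w δ} = ⊤) :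
    StrictConvexOn ℝ Set.univ (logMGF Δ w) := by
  have hS := exists_pos_weight_of_affineSpan_eq_top haff
  refine ⟨convex_univ, fun x _ y _ hxy a b ha hb hab ↦ ?_⟩
  have hZx := partitionFn_pos hw hS x
  have hZy := partitionFn_pos hw hS y
  calc logMGF Δ w (a • x + b • y)
      < Real.log (partitionFn Δ w x ^ a * partitionFn Δ w y ^ b) :=
        Real.log_lt_log (partitionFn_pos hw hS _) (partitionFn_add_smul_lt hw haff hxy ha hb hab)
    _ = a • logMGF Δ w x + b • logMGF Δ w y := by
        rw [Real.log_mul (by positivity) (by positivity), Real.log_rpow hZx, Real.log_rpow hZy]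
        rfl

/-- If the affine hull of the support S = {δ ∈ Δ : w(δ) > 0} equals all
of ℝ^d, then Φ is strictly convex on ℝ^d. -/
theorem logMGF_strictConvexOn (d : ℕ) (hd : 1 ≤ d)
    (Δ : Finset (EuclideanSpace ℝ (Fin d))) (hΔ : Δ.Nonempty)
    (w : EuclideanSpace ℝ (Fin d) → ℝ) (hw : ∀ δ ∈ Δ, 0 ≤ w δ)
    (hwpos : 0 < ∑ δ ∈ Δ, w δ)
    (haff : affineSpan ℝ {δ : EuclideanSpace ℝ (Fin d) | δ ∈ Δ ∧ 0 < w δ} = ⊤) :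
    StrictConvexOn ℝ Set.univ (logMGF Δ w) :=
  logMGF_strictConvexOn_general d Δ w hw haff
end

section
/- The effective domain of the Legendre–Fenchel transform Φ* equals the convex hull of the support of the weights: for every x ∈ ℝ^d, Φ*(x) < ∞ if and only if x ∈ conv S. In particular, if w(δ) > 0 for every δ ∈ Δ, then {x : Φ*(x) < ∞} = conv Δ. -/
open scoped RealInnerProductSpace

/-- The Legendre–Fenchel transform Φ*(x) = sup_{v∈ℝ^d} (⟨v,x⟩ − Φ(v)), valued in
(−∞,∞]. -/
noncomputable def logMGFStar {d : ℕ} (Δ : Finset (EuclideanSpace ℝ (Fin d)))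
    (w : EuclideanSpace ℝ (Fin d) → ℝ) (x : EuclideanSpace ℝ (Fin d)) : EReal :=
  ⨆ v : EuclideanSpace ℝ (Fin d), ((⟪v, x⟫ - logMGF Δ w v : ℝ) : EReal)

/-! For every `δ` in the support `S`, `Φ(v) ≥ log w(δ) + ⟪v, δ⟫`, and a linear functional
attains its maximum over `conv S` at a point of `S`; so for `x ∈ conv S` the function
`v ↦ ⟪v, x⟫ - Φ(v)` is bounded above by `max_{δ ∈ S} (-log w(δ))`. If `x ∉ conv S`, some
`⟪v, ·⟫` strictly separates `x` from the compact convex set `conv S`, say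
`⟪v, δ⟫ < u < ⟪v, x⟫`; then `Φ(t • v) ≤ log (∑ w) + t u` for `t ≥ 0`, so
`⟪t • v, x⟫ - Φ(t • v)` grows linearly in `t` and `Φ*(x) = ⊤`. -/

open Filter Set

theorem EReal.iSup_coe_lt_top_iff {ι : Sort*} (f : ι → ℝ) :
    ⨆ i, (f i : EReal) < ⊤ ↔ BddAbove (range f) := by
  constructor
  · intro h
    refine ⟨(⨆ i, (f i : EReal)).toReal, forall_mem_range.2 fun i => ?_⟩
    exact EReal.coe_le_coe_iff.1 ((le_iSup _ i).trans (EReal.le_coe_toReal h.ne))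
  · rintro ⟨M, hM⟩
    exact (iSup_le fun i => EReal.coe_le_coe_iff.2 (hM (mem_range_self i))).trans_lt
      (EReal.coe_lt_top M)

theorem exists_inner_lt_of_notMem_of_isClosed {E : Type*} [NormedAddCommGroup E]
    [InnerProductSpace ℝ E] [CompleteSpace E] {s : Set E} {x : E} (hc : Convex ℝ s)
    (hs : IsClosed s) (hx : x ∉ s) :
    ∃ v : E, ∃ u : ℝ, (∀ y ∈ s, ⟪v, y⟫ < u) ∧ u < ⟪v, x⟫ := by
  obtain ⟨f, u, hfs, hfx⟩ := geometric_hahn_banach_closed_point hc hs hx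
  refine ⟨(InnerProductSpace.toDual ℝ E).symm f, u, fun y hy => ?_, ?_⟩
  · simpa [InnerProductSpace.toDual_symm_apply] using hfs y hy
  · simpa [InnerProductSpace.toDual_symm_apply] using hfx

section logMGF

variable {d : ℕ} {Δ : Finset (EuclideanSpace ℝ (Fin d))} {w : EuclideanSpace ℝ (Fin d) → ℝ}

theorem log_add_inner_le_logMGF (hw : ∀ δ ∈ Δ, 0 ≤ w δ) {δ : EuclideanSpace ℝ (Fin d)}
    (hδ : δ ∈ Δ) (hwδ : 0 < w δ) (v : EuclideanSpace ℝ (Fin d)) :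
    Real.log (w δ) + ⟪v, δ⟫ ≤ logMGF Δ w v := by
  have hterm : w δ * Real.exp ⟪v, δ⟫ ≤ ∑ δ' ∈ Δ, w δ' * Real.exp ⟪v, δ'⟫ :=
    Finset.single_le_sum (fun δ' hδ' => mul_nonneg (hw δ' hδ') (Real.exp_pos _).le) hδ
  simpa [logMGF, Real.log_mul hwδ.ne' (Real.exp_ne_zero _)] using
    Real.log_le_log (mul_pos hwδ (Real.exp_pos _)) hterm

theorem logMGF_le_of_inner_le (hw : ∀ δ ∈ Δ, 0 ≤ w δ) (hwpos : 0 < ∑ δ ∈ Δ, w δ)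
    {v : EuclideanSpace ℝ (Fin d)} {c : ℝ} (hc : ∀ δ ∈ Δ, 0 < w δ → ⟪v, δ⟫ ≤ c) :
    logMGF Δ w v ≤ Real.log (∑ δ ∈ Δ, w δ) + c := by
  obtain ⟨δ₀, hδ₀, hwδ₀⟩ : ∃ δ ∈ Δ, 0 < w δ := by
    simpa using Finset.exists_lt_of_sum_lt (f := fun _ => 0) (by simpa using hwpos)
  have hsum : ∑ δ ∈ Δ, w δ * Real.exp ⟪v, δ⟫ ≤ (∑ δ ∈ Δ, w δ) * Real.exp c := by
    rw [Finset.sum_mul]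
    refine Finset.sum_le_sum fun δ hδ => ?_
    rcases (hw δ hδ).eq_or_lt with hzero | hwδ
    · simp [← hzero]
    · exact mul_le_mul_of_nonneg_left (Real.exp_le_exp.2 (hc δ hδ hwδ)) hwδ.le
  have hpos : 0 < ∑ δ ∈ Δ, w δ * Real.exp ⟪v, δ⟫ :=
    Finset.sum_pos' (fun δ hδ => mul_nonneg (hw δ hδ) (Real.exp_pos _).le)
      ⟨δ₀, hδ₀, mul_pos hwδ₀ (Real.exp_pos _)⟩
  calc logMGF Δ w v ≤ Real.log ((∑ δ ∈ Δ, w δ) * Real.exp c) := Real.log_le_log hpos hsum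
    _ = Real.log (∑ δ ∈ Δ, w δ) + c := by
      rw [Real.log_mul hwpos.ne' (Real.exp_ne_zero _), Real.log_exp]

theorem bddAbove_inner_sub_logMGF_of_mem_convexHull (hw : ∀ δ ∈ Δ, 0 ≤ w δ)
    {x : EuclideanSpace ℝ (Fin d)} (hx : x ∈ convexHull ℝ {δ | δ ∈ Δ ∧ 0 < w δ}) :
    BddAbove (range fun v => ⟪v, x⟫ - logMGF Δ w v) := by
  obtain ⟨C, hC⟩ := ((Δ.finite_toSet.sep fun δ => 0 < w δ).image
    fun δ => -Real.log (w δ)).bddAbove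
  refine ⟨C, forall_mem_range.2 fun v => ?_⟩
  obtain ⟨δ, ⟨hδ, hwδ⟩, hxδ⟩ :=
    ((innerₛₗ ℝ v).convexOn convex_univ).exists_ge_of_mem_convexHull (subset_univ _) hx
  have hδΦ := log_add_inner_le_logMGF hw hδ hwδ v
  have hδC := hC (mem_image_of_mem _ ⟨hδ, hwδ⟩)
  simp only [innerₛₗ_apply_apply] at hxδ
  linarith

theorem not_bddAbove_inner_sub_logMGF_of_notMem_convexHull (hw : ∀ δ ∈ Δ, 0 ≤ w δ)
    (hwpos : 0 < ∑ δ ∈ Δ, w δ) {x : EuclideanSpace ℝ (Fin d)}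
    (hx : x ∉ convexHull ℝ {δ | δ ∈ Δ ∧ 0 < w δ}) :
    ¬BddAbove (range fun v => ⟪v, x⟫ - logMGF Δ w v) := by
  obtain ⟨v, u, hvu, hux⟩ := exists_inner_lt_of_notMem_of_isClosed (convex_convexHull ℝ _)
    ((Δ.finite_toSet.sep fun δ => 0 < w δ).isClosed_convexHull ℝ) hx
  have hlower : ∀ t : ℝ, 0 ≤ t → t * (⟪v, x⟫ - u) - Real.log (∑ δ ∈ Δ, w δ) ≤
      ⟪t • v, x⟫ - logMGF Δ w (t • v) := by
    intro t ht
    have hΦ := logMGF_le_of_inner_le (v := t • v) (c := t * u) hw hwpos fun δ hδ hwδ => by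
      rw [real_inner_smul_left]
      exact mul_le_mul_of_nonneg_left
        (hvu δ (subset_convexHull ℝ _ ⟨hδ, hwδ⟩)).le ht
    rw [real_inner_smul_left]
    linarith
  have htendsto : Tendsto (fun t : ℝ => ⟪t • v, x⟫ - logMGF Δ w (t • v)) atTop atTop :=
    tendsto_atTop_mono' _ (eventually_ge_atTop 0 |>.mono hlower)
      (tendsto_atTop_add_const_right _ _ (tendsto_id.atTop_mul_const (sub_pos.2 hux)))
  exact fun hbdd => not_bddAbove_of_tendsto_atTop htendsto
    (hbdd.mono (range_comp_subset_range (· • v) fun v => ⟪v, x⟫ - logMGF Δ w v))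

end logMGF

theorem logMGFStar_domain_general (d : ℕ)
    (Δ : Finset (EuclideanSpace ℝ (Fin d)))
    (w : EuclideanSpace ℝ (Fin d) → ℝ) (hw : ∀ δ ∈ Δ, 0 ≤ w δ)
    (hwpos : 0 < ∑ δ ∈ Δ, w δ) :
    (∀ x, logMGFStar Δ w x < ⊤ ↔
        x ∈ convexHull ℝ {δ : EuclideanSpace ℝ (Fin d) | δ ∈ Δ ∧ 0 < w δ}) ∧
      ((∀ δ ∈ Δ, 0 < w δ) →
        {x | logMGFStar Δ w x < ⊤} =
          convexHull ℝ (Δ : Set (EuclideanSpace ℝ (Fin d)))) := by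
  have hdomain : ∀ x, logMGFStar Δ w x < ⊤ ↔
      x ∈ convexHull ℝ {δ : EuclideanSpace ℝ (Fin d) | δ ∈ Δ ∧ 0 < w δ} := fun x => by
    rw [logMGFStar, EReal.iSup_coe_lt_top_iff]
    exact ⟨not_imp_not.1 (not_bddAbove_inner_sub_logMGF_of_notMem_convexHull hw hwpos),
      bddAbove_inner_sub_logMGF_of_mem_convexHull hw⟩
  refine ⟨hdomain, fun hall => ?_⟩
  have hsupport : {δ | δ ∈ Δ ∧ 0 < w δ} = (Δ : Set (EuclideanSpace ℝ (Fin d))) :=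
    sep_eq_self_iff_mem_true.2 hall
  ext x
  rw [mem_ofPred_eq, hdomain, hsupport]

/-- The effective domain of Φ* equals the convex hull of the support of
the weights: Φ*(x) < ∞ iff x ∈ conv S, where S = {δ ∈ Δ : w(δ) > 0}.  In particular,
if all weights are positive then {x : Φ*(x) < ∞} = conv Δ. -/
theorem logMGFStar_domain (d : ℕ) (hd : 1 ≤ d)
    (Δ : Finset (EuclideanSpace ℝ (Fin d))) (hΔ : Δ.Nonempty)
    (w : EuclideanSpace ℝ (Fin d) → ℝ) (hw : ∀ δ ∈ Δ, 0 ≤ w δ)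
    (hwpos : 0 < ∑ δ ∈ Δ, w δ) :
    (∀ x, logMGFStar Δ w x < ⊤ ↔
        x ∈ convexHull ℝ {δ : EuclideanSpace ℝ (Fin d) | δ ∈ Δ ∧ 0 < w δ}) ∧
      ((∀ δ ∈ Δ, 0 < w δ) →
        {x | logMGFStar Δ w x < ⊤} =
          convexHull ℝ (Δ : Set (EuclideanSpace ℝ (Fin d)))) :=
  logMGFStar_domain_general d Δ w hw hwpos
end

section
/- The Legendre–Fenchel transform Φ* is continuous relative to its effective domain: the restriction of Φ* to the polytope conv S is a continuous real-valued function (i.e., Φ* is ContinuousOn conv S). -/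
/-!
Φ* is the supremum of the affine functions `x ↦ ⟪v, x⟫ - Φ v`. Each of them is bounded on conv S by
its values at the points of S, where `⟪v, δ⟫ - Φ v ≤ -log (w δ)`; hence on conv S the supremum is
finite, convex, and lower semicontinuous as a supremum of continuous functions.

Upper semicontinuity at `x` of a function `f` convex on conv S is the polytope case of the
Gale–Klee–Rockafellar theorem. By the conic Carathéodory theorem, `y - x` is a nonnegative
combination of linearly independent vectors `δ - x`, `δ ∈ S`, whose coefficients are therefore
`O(‖y - x‖)`. So every `y ∈ conv S` is `(1 - t) x + t z` with `z ∈ conv S` and `t ≤ C ‖y - x‖`,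
and convexity gives `f y ≤ f x + C ‖y - x‖ (max_S f - f x)`.
-/

open scoped RealInnerProductSpace

open Finset

section ConicalCaratheodory

variable {ι 𝕜 E : Type*} [Field 𝕜] [LinearOrder 𝕜] [IsStrictOrderedRing 𝕜]
  [AddCommGroup E] [Module 𝕜 E]

theorem exists_erase_nonneg_sum_smul_eq [DecidableEq ι] {v : ι → E} {s : Finset ι} {c g : ι → 𝕜}
    (hc : ∀ i ∈ s, 0 ≤ c i) (hg : ∑ i ∈ s, g i • v i = 0) (hgpos : ∃ i ∈ s, 0 < g i) :
    ∃ i₀ ∈ s, ∃ k : ι → 𝕜, (∀ i ∈ s.erase i₀, 0 ≤ k i) ∧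
      ∑ i ∈ s.erase i₀, k i • v i = ∑ i ∈ s, c i • v i := by
  obtain ⟨i₀, hi₀, hmin⟩ := {i ∈ s | 0 < g i}.exists_min_image (fun i => c i / g i)
    (hgpos.imp fun i hi => mem_filter.mpr hi)
  rw [mem_filter] at hi₀
  -- `τ` is the largest step along `-g` that keeps every coefficient of `c - τ • g` nonnegative.
  set τ := c i₀ / g i₀
  have hτ : 0 ≤ τ := div_nonneg (hc i₀ hi₀.1) hi₀.2.le
  refine ⟨i₀, hi₀.1, fun i => c i - τ * g i, fun i hi => ?_, ?_⟩
  · have his := mem_of_mem_erase hi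
    rcases lt_or_ge 0 (g i) with hgi | hgi
    · exact sub_nonneg.mpr ((le_div_iff₀ hgi).mp (hmin i (mem_filter.mpr ⟨his, hgi⟩)))
    · nlinarith [hc i his]
  · rw [sum_erase _ (by simp [τ, hi₀.2.ne'])]
    simp only [sub_smul, mul_smul, sum_sub_distrib, ← smul_sum, hg, smul_zero, sub_zero]

theorem exists_linearIndepOn_nonneg_sum_smul_eq (v : ι → E) (s : Finset ι) {c : ι → 𝕜}
    (hc : ∀ i ∈ s, 0 ≤ c i) :
    ∃ t ⊆ s, LinearIndepOn 𝕜 v (t : Set ι) ∧ ∃ k : ι → 𝕜, (∀ i ∈ t, 0 ≤ k i) ∧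
      ∑ i ∈ t, k i • v i = ∑ i ∈ s, c i • v i := by
  classical
  induction s using Finset.strongInduction generalizing c with
  | H s ih =>
    by_cases hs : LinearIndepOn 𝕜 v (s : Set ι)
    · exact ⟨s, subset_rfl, hs, c, hc, rfl⟩
    obtain ⟨g, hg, i, hi, hgi⟩ := not_linearIndepOn_finset_iff.mp hs
    obtain ⟨g, hg, hgpos⟩ : ∃ g : ι → 𝕜, ∑ i ∈ s, g i • v i = 0 ∧ ∃ i ∈ s, 0 < g i := by
      rcases hgi.lt_or_gt with hneg | hpos
      · exact ⟨-g, by simp [hg], i, hi, by simpa using hneg⟩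
      · exact ⟨g, hg, i, hi, hpos⟩
    obtain ⟨i₀, hi₀, k, hk, hks⟩ := exists_erase_nonneg_sum_smul_eq hc hg hgpos
    obtain ⟨t, hts, ht, k', hk', hk's⟩ := ih _ (erase_ssubset hi₀) hk
    exact ⟨t, hts.trans (erase_subset _ _), ht, k', hk', hk's.trans hks⟩

end ConicalCaratheodory

section Polytope

variable {E : Type*} [NormedAddCommGroup E] [NormedSpace ℝ E]

theorem LinearIndepOn.exists_sum_abs_le_mul_norm {ι : Type*} {v : ι → E} {s : Finset ι}
    (hv : LinearIndepOn ℝ v (s : Set ι)) :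
    ∃ C ≥ 0, ∀ c : ι → ℝ, ∑ i ∈ s, |c i| ≤ C * ‖∑ i ∈ s, c i • v i‖ := by
  obtain ⟨K, -, hK⟩ := (Fintype.linearCombination ℝ fun i : s => v i).injective_iff_antilipschitz.mp
    (linearIndependent_iff_injective_fintypeLinearCombination.mp hv)
  refine ⟨s.card * K, by positivity, fun c => ?_⟩
  set c' : s → ℝ := fun i => c i
  have hbound : ‖c'‖ ≤ K * ‖∑ i ∈ s, c i • v i‖ := by
    simpa [Fintype.linearCombination_apply, c', ← s.sum_coe_sort fun i => c i • v i]
      using ZeroHomClass.bound_of_antilipschitz _ hK c'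
  calc ∑ i ∈ s, |c i| = ∑ i : s, ‖c' i‖ := (s.sum_coe_sort _).symm
    _ ≤ ∑ _i : s, ‖c'‖ := sum_le_sum fun i _ => norm_le_pi_norm c' i
    _ = s.card * ‖c'‖ := by simp
    _ ≤ s.card * (K * ‖∑ i ∈ s, c i • v i‖) := by gcongr
    _ = _ := by ring

theorem Finset.exists_forall_mem_convexHull_eq_combination_le_mul_norm (S : Finset E) (x : E) :
    ∃ C, ∀ y ∈ convexHull ℝ (S : Set E), ∃ z ∈ convexHull ℝ (S : Set E), ∃ t ∈ Set.Icc (0 : ℝ) 1,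
      t ≤ C * ‖y - x‖ ∧ y = (1 - t) • x + t • z := by
  have hbound (s : Finset E) : ∃ C ≥ 0, LinearIndepOn ℝ (· - x) (s : Set E) →
      ∀ c : E → ℝ, ∑ δ ∈ s, |c δ| ≤ C * ‖∑ δ ∈ s, c δ • (δ - x)‖ := by
    by_cases hs : LinearIndepOn ℝ (· - x) (s : Set E)
    · exact (hs.exists_sum_abs_le_mul_norm).imp fun C hC => ⟨hC.1, fun _ => hC.2⟩
    · exact ⟨0, le_rfl, fun h => absurd h hs⟩
  choose F hF0 hF using hbound
  refine ⟨∑ s ∈ S.powerset, F s, fun y hy => ?_⟩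
  rcases eq_or_ne y x with rfl | hyx
  · exact ⟨y, hy, 0, ⟨le_rfl, zero_le_one⟩, by simp, by simp⟩
  obtain ⟨a, ha0, ha1, hay⟩ := Finset.mem_convexHull'.mp hy
  have hyx' : ∑ δ ∈ S, a δ • (δ - x) = y - x := by
    simp only [smul_sub, sum_sub_distrib, ← sum_smul, ha1, one_smul, hay]
  obtain ⟨s, hsS, hs, k, hk0, hks⟩ := exists_linearIndepOn_nonneg_sum_smul_eq (· - x) S ha0
  rw [hyx'] at hks
  set σ := ∑ δ ∈ s, k δ
  have hσ : σ ≤ (∑ s ∈ S.powerset, F s) * ‖y - x‖ :=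
    calc σ ≤ ∑ δ ∈ s, |k δ| := sum_le_sum fun δ _ => le_abs_self _
      _ ≤ F s * ‖y - x‖ := hks ▸ hF s hs k
      _ ≤ _ := by
        gcongr
        exact single_le_sum (fun s _ => hF0 s) (mem_powerset.mpr hsS)
  have hσpos : 0 < σ := by
    refine (sum_nonneg hk0).lt_of_ne fun hσ0 => hyx (sub_eq_zero.mp ?_)
    have hk : ∀ δ ∈ s, k δ = 0 := (sum_eq_zero_iff_of_nonneg hk0).mp hσ0.symm
    rw [← hks]
    exact sum_eq_zero fun δ hδ => by rw [hk δ hδ, zero_smul]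
  by_cases hσ1 : σ ≤ 1
  · refine ⟨s.centerMass k id, s.centerMass_mem_convexHull hk0 hσpos fun δ hδ => hsS hδ,
      σ, ⟨hσpos.le, hσ1⟩, hσ, ?_⟩
    rw [centerMass, smul_inv_smul₀ hσpos.ne', sub_smul, one_smul]
    simp only [smul_sub, sum_sub_distrib, ← sum_smul] at hks
    rw [← sub_add_cancel y x, ← hks]
    simp only [id, σ]
    abel
  · exact ⟨y, hy, 1, ⟨zero_le_one, le_rfl⟩, (not_le.mp hσ1).le.trans hσ, by simp⟩

theorem ConvexOn.upperSemicontinuousOn_convexHull {f : E → ℝ} (S : Finset E)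
    (hf : ConvexOn ℝ (convexHull ℝ (S : Set E)) f) :
    UpperSemicontinuousOn f (convexHull ℝ (S : Set E)) := by
  intro x hx b hb
  have hS : S.Nonempty := Finset.coe_nonempty.mp (convexHull_nonempty_iff.mp ⟨x, hx⟩)
  set M := S.sup' hS f
  have hfM : ∀ y ∈ convexHull ℝ (S : Set E), f y ≤ M := fun y hy => by
    obtain ⟨δ, hδ, hyδ⟩ := hf.exists_ge_of_mem_convexHull (subset_convexHull ℝ _) hy
    exact hyδ.trans (S.le_sup' f hδ)
  obtain ⟨C, hC⟩ := S.exists_forall_mem_convexHull_eq_combination_le_mul_norm x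
  have hle : ∀ y ∈ convexHull ℝ (S : Set E), f y ≤ f x + C * ‖y - x‖ * (M - f x) := by
    intro y hy
    obtain ⟨z, hz, t, ⟨ht0, ht1⟩, htC, rfl⟩ := hC y hy
    calc f ((1 - t) • x + t • z) ≤ (1 - t) * f x + t * f z :=
          hf.2 hx hz (sub_nonneg.mpr ht1) ht0 (sub_add_cancel 1 t)
      _ ≤ f x + t * (M - f x) := by nlinarith [hfM z hz]
      _ ≤ _ := by gcongr; linarith [hfM x hx]
  have hlim : Filter.Tendsto (fun y => f x + C * ‖y - x‖ * (M - f x)) (nhds x) (nhds (f x)) := by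
    simpa using tendsto_const_nhds.add
      ((tendsto_const_nhds.mul (tendsto_norm_sub_self x)).mul tendsto_const_nhds)
  filter_upwards [self_mem_nhdsWithin, nhdsWithin_le_nhds (hlim.eventually (gt_mem_nhds hb))]
    with y hy hyb using (hle y hy).trans_lt hyb

end Polytope

section Supremum

variable {ι E : Type*} [AddCommGroup E] [Module ℝ E] {f : ι → E → ℝ} {s : Set E}

theorem ConvexOn.ciSup [Nonempty ι] (hf : ∀ i, ConvexOn ℝ s (f i))
    (hbdd : ∀ x ∈ s, BddAbove (Set.range fun i => f i x)) :
    ConvexOn ℝ s fun x => ⨆ i, f i x := by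
  refine ⟨(hf (Classical.arbitrary ι)).1, fun x hx y hy a b ha hb hab => ciSup_le fun i => ?_⟩
  calc f i (a • x + b • y) ≤ a • f i x + b • f i y := (hf i).2 hx hy ha hb hab
    _ ≤ a • (⨆ i, f i x) + b • ⨆ i, f i y := by
      gcongr
      exacts [le_ciSup (hbdd x hx) i, le_ciSup (hbdd y hy) i]

theorem bddAbove_range_of_mem_convexHull {S : Finset E}
    (hf : ∀ i, ConvexOn ℝ (convexHull ℝ S) (f i))
    (hbdd : ∀ δ ∈ S, BddAbove (Set.range fun i => f i δ))
    {x : E} (hx : x ∈ convexHull ℝ (S : Set E)) :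
    BddAbove (Set.range fun i => f i x) := by
  obtain ⟨M, hM⟩ := (S.finite_toSet.bddAbove_biUnion).mpr hbdd
  refine ⟨M, ?_⟩
  rintro _ ⟨i, rfl⟩
  obtain ⟨δ, hδ, hxδ⟩ := (hf i).exists_ge_of_mem_convexHull (subset_convexHull ℝ _) hx
  exact hxδ.trans (hM (Set.mem_biUnion hδ ⟨i, rfl⟩))

end Supremum

theorem continuousOn_ciSup_of_convexOn_convexHull {ι E : Type*} [NormedAddCommGroup E]
    [NormedSpace ℝ E] [Nonempty ι] {f : ι → E → ℝ} (S : Finset E)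
    (hcont : ∀ i, ContinuousOn (f i) (convexHull ℝ S))
    (hconv : ∀ i, ConvexOn ℝ (convexHull ℝ S) (f i))
    (hbdd : ∀ δ ∈ S, BddAbove (Set.range fun i => f i δ)) :
    ContinuousOn (fun x => ⨆ i, f i x) (convexHull ℝ S) := fun x hx =>
  have hbdd' := fun _ hy => bddAbove_range_of_mem_convexHull hconv hbdd hy
  continuousWithinAt_iff_lower_upperSemicontinuousWithinAt.mpr
    ⟨lowerSemicontinuousOn_ciSup hbdd' (fun i => (hcont i).lowerSemicontinuousOn) x hx,
      (ConvexOn.ciSup hconv hbdd').upperSemicontinuousOn_convexHull S x hx⟩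

section LogMGF

variable {d : ℕ} {Δ : Finset (EuclideanSpace ℝ (Fin d))} {w : EuclideanSpace ℝ (Fin d) → ℝ}

theorem inner_sub_logMGF_le (hw : ∀ δ ∈ Δ, 0 ≤ w δ) {δ : EuclideanSpace ℝ (Fin d)} (hδ : δ ∈ Δ)
    (hwδ : 0 < w δ) (v : EuclideanSpace ℝ (Fin d)) : ⟪v, δ⟫ - logMGF Δ w v ≤ -Real.log (w δ) := by
  have hterm : w δ * Real.exp ⟪v, δ⟫ ≤ ∑ δ' ∈ Δ, w δ' * Real.exp ⟪v, δ'⟫ :=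
    single_le_sum (fun δ' hδ' => mul_nonneg (hw δ' hδ') (Real.exp_pos _).le) hδ
  have hlog := Real.log_le_log (by positivity) hterm
  rw [Real.log_mul hwδ.ne' (Real.exp_pos _).ne', Real.log_exp] at hlog
  rw [logMGF]
  linarith

theorem logMGFStar_eq_ciSup {x : EuclideanSpace ℝ (Fin d)}
    (hbdd : BddAbove (Set.range fun v => ⟪v, x⟫ - logMGF Δ w v)) :
    logMGFStar Δ w x = ((⨆ v, ⟪v, x⟫ - logMGF Δ w v : ℝ) : EReal) :=
  (EReal.coe_strictMono.monotone.map_ciSup_of_continuousAt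
    continuous_coe_real_ereal.continuousAt hbdd).symm

end LogMGF

theorem logMGFStar_continuousOn_domain_general (d : ℕ)
    (Δ : Finset (EuclideanSpace ℝ (Fin d)))
    (w : EuclideanSpace ℝ (Fin d) → ℝ) (hw : ∀ δ ∈ Δ, 0 ≤ w δ) :
    (∀ x ∈ convexHull ℝ {δ : EuclideanSpace ℝ (Fin d) | δ ∈ Δ ∧ 0 < w δ},
        logMGFStar Δ w x ≠ ⊤ ∧ logMGFStar Δ w x ≠ ⊥) ∧
      ContinuousOn (logMGFStar Δ w)
        (convexHull ℝ {δ : EuclideanSpace ℝ (Fin d) | δ ∈ Δ ∧ 0 < w δ}) := by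
  rw [← coe_filter]
  set S := Δ.filter (fun δ => 0 < w δ)
  have haffine (v : EuclideanSpace ℝ (Fin d)) :
      ConvexOn ℝ (convexHull ℝ S) fun x => ⟪v, x⟫ - logMGF Δ w v :=
    ((innerₛₗ ℝ v).convexOn (convex_convexHull ℝ _)).sub (concaveOn_const _ (convex_convexHull ℝ _))
  have hbdd : ∀ δ ∈ S, BddAbove (Set.range fun v => ⟪v, δ⟫ - logMGF Δ w v) := fun δ hδ =>
    ⟨_, Set.forall_mem_range.mpr (inner_sub_logMGF_le hw (mem_filter.mp hδ).1 (mem_filter.mp hδ).2)⟩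
  have hstar : ∀ x ∈ convexHull ℝ (S : Set _), logMGFStar Δ w x = _ := fun x hx =>
    logMGFStar_eq_ciSup (bddAbove_range_of_mem_convexHull haffine hbdd hx)
  refine ⟨fun x hx => hstar x hx ▸ ⟨EReal.coe_ne_top _, EReal.coe_ne_bot _⟩, ?_⟩
  refine (continuous_coe_real_ereal.comp_continuousOn ?_).congr hstar
  exact continuousOn_ciSup_of_convexOn_convexHull S (fun v => by fun_prop) haffine hbdd

/-- Φ* is continuous relative to its effective domain: on the polytope
conv S (S = {δ ∈ Δ : w(δ) > 0}) it is finite, and Φ* is ContinuousOn conv S. -/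
theorem logMGFStar_continuousOn_domain (d : ℕ) (hd : 1 ≤ d)
    (Δ : Finset (EuclideanSpace ℝ (Fin d))) (hΔ : Δ.Nonempty)
    (w : EuclideanSpace ℝ (Fin d) → ℝ) (hw : ∀ δ ∈ Δ, 0 ≤ w δ)
    (hwpos : 0 < ∑ δ ∈ Δ, w δ) :
    (∀ x ∈ convexHull ℝ {δ : EuclideanSpace ℝ (Fin d) | δ ∈ Δ ∧ 0 < w δ},
        logMGFStar Δ w x ≠ ⊤ ∧ logMGFStar Δ w x ≠ ⊥) ∧
      ContinuousOn (logMGFStar Δ w)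
        (convexHull ℝ {δ : EuclideanSpace ℝ (Fin d) | δ ∈ Δ ∧ 0 < w δ}) :=
  logMGFStar_continuousOn_domain_general d Δ w hw
end

section
/- (Covering lemma) For every γ ≥ 0, every η > 0 with ρ > 2η, and every φ ∈ E([0,T]), there exists a finite set R ⊆ B̄_{ρ,γ}(φ) of cardinality at most exp(d(n+1)(log(ρ/η) + 2)) such that B̄_{ρ,γ}(φ) ⊆ ⋃_{ψ ∈ R} A_η(ψ); that is, every ψ′ ∈ B̄_{ρ,γ}(φ) satisfies max_{0≤i≤n} |ψ′(t_i) − ψ(t_i)| ≤ 2η for some ψ ∈ R. -/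
/-!
Evaluating a path at the partition times maps `B̄_{ρ,γ}(φ)` into the closed ball of radius `ρ`
around `(φ(t_i))_i` in `(ℝ^d)^{n+1}`. A maximal `2η`-separated subset of the image is a
`2η`-cover of it, and since the `η`-balls around its points are disjoint and lie in the ball of
radius `ρ + η`, comparing volumes bounds its size by `((ρ + η)/η)^{d(n+1)} ≤ (e²ρ/η)^{d(n+1)}`.
Choosing one path over each point of this subset gives `R`.
-/

open MeasureTheory Metric Module Set
open scoped ENNReal NNReal

section Packing

variable {E : Type*} [NormedAddCommGroup E] [NormedSpace ℝ E] [FiniteDimensional ℝ E]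

theorem Finset.card_le_of_isSeparated_of_subset_closedBall {F : Finset E} {c : E} {ρ : ℝ}
    {ε : ℝ≥0} (hρ : 0 ≤ ρ) (hε : 0 < ε) (hF : (F : Set E) ⊆ closedBall c ρ)
    (hsep : IsSeparated (2 * ε : ℝ≥0) (F : Set E)) :
    (F.card : ℝ) ≤ ((ρ + ε) / ε) ^ finrank ℝ E := by
  borelize E
  let μ : Measure E := Measure.addHaar
  have hεr : (0 : ℝ) < ε := hε
  have hdisj : (F : Set E).PairwiseDisjoint (ball · ε) := by
    intro x hx y hy hxy
    have hxy' : ((2 * ε : ℝ≥0) : ℝ≥0∞) < edist x y := hsep hx hy hxy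
    rw [edist_nndist, ENNReal.coe_lt_coe, ← NNReal.coe_lt_coe, coe_nndist] at hxy'
    push_cast at hxy'
    exact ball_disjoint_ball (by linarith)
  have hsub : (⋃ x ∈ F, ball x ε) ⊆ ball c (ρ + ε) :=
    iUnion₂_subset fun x hx => ball_subset_ball' (by linarith [mem_closedBall.1 (hF hx)])
  have hvol : (F.card : ℝ≥0∞) * ENNReal.ofReal (ε ^ finrank ℝ E) * μ (ball 0 1)
      ≤ ENNReal.ofReal ((ρ + ε) ^ finrank ℝ E) * μ (ball 0 1) :=
    calc (F.card : ℝ≥0∞) * ENNReal.ofReal (ε ^ finrank ℝ E) * μ (ball 0 1)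
        = ∑ x ∈ F, μ (ball x ε) := by
          simp [Measure.addHaar_ball_of_pos μ _ hεr, mul_assoc]
      _ = μ (⋃ x ∈ F, ball x ε) :=
          (measure_biUnion_finset hdisj fun _ _ => measurableSet_ball).symm
      _ ≤ μ (ball c (ρ + ε)) := measure_mono hsub
      _ = ENNReal.ofReal ((ρ + ε) ^ finrank ℝ E) * μ (ball 0 1) :=
          Measure.addHaar_ball_of_pos μ c (by positivity)
  have hvol' : (F.card : ℝ≥0∞) * ENNReal.ofReal (ε ^ finrank ℝ E)
      ≤ ENNReal.ofReal ((ρ + ε) ^ finrank ℝ E) :=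
    (ENNReal.mul_le_mul_iff_left (measure_ball_pos μ 0 one_pos).ne' measure_ball_lt_top.ne).1 hvol
  rw [← ENNReal.ofReal_natCast, ← ENNReal.ofReal_mul (by positivity),
    ENNReal.ofReal_le_ofReal_iff (by positivity)] at hvol'
  rwa [div_pow, le_div_iff₀ (by positivity)]

theorem packingNumber_le_of_subset_closedBall {A : Set E} {c : E} {ρ : ℝ} {ε : ℝ≥0}
    (hρ : 0 ≤ ρ) (hε : 0 < ε) (hA : A ⊆ closedBall c ρ) :
    packingNumber (2 * ε) A ≤ ⌊((ρ + ε) / ε) ^ finrank ℝ E⌋₊ := by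
  refine iSup₂_le fun C hCA => iSup_le fun hC => ?_
  by_contra! hlarge
  obtain ⟨G, hGC, hGcard⟩ := exists_subset_encard_eq (Order.add_one_le_of_lt hlarge)
  have hGfin : G.Finite := finite_of_encard_eq_coe hGcard
  have hcard := Finset.card_le_of_isSeparated_of_subset_closedBall hρ hε
    (by simpa using hGC.trans (hCA.trans hA)) (F := hGfin.toFinset) (by simpa using hC.subset hGC)
  rw [hGfin.encard_eq_coe_toFinset_card] at hGcard
  norm_cast at hGcard
  rw [hGcard, Nat.cast_add_one] at hcard
  exact (Nat.lt_floor_add_one _).not_ge hcard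

end Packing

theorem exists_finset_subset_dist_le_of_packingNumber_image_ne_top {α X : Type*}
    [PseudoMetricSpace X] (f : α → X) (S : Set α) {ε : ℝ≥0}
    (h : packingNumber ε (f '' S) ≠ ⊤) :
    ∃ R : Finset α, ↑R ⊆ S ∧ (R.card : ℕ∞) ≤ packingNumber ε (f '' S) ∧
      ∀ x ∈ S, ∃ y ∈ R, dist (f x) (f y) ≤ ε := by
  classical
  set M := maximalSeparatedSet ε (f '' S)
  obtain ⟨u, huS, hinj, hu⟩ := SurjOn.exists_subset_injOn_image_eq
    (maximalSeparatedSet_subset : M ⊆ f '' S)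
  have hMfin : M.Finite := encard_ne_top_iff.1 (encard_maximalSeparatedSet h ▸ h)
  have hufin : u.Finite := Finite.of_finite_image (hu ▸ hMfin) hinj
  refine ⟨hufin.toFinset, by simpa using huS, ?_, fun x hx => ?_⟩
  · rw [← encard_coe_eq_coe_finsetCard, Finite.coe_toFinset, ← hinj.encard_image, hu,
      encard_maximalSeparatedSet h]
  · obtain ⟨y, hyM, hxy⟩ := mem_iUnion₂.1 <|
      (isCover_maximalSeparatedSet h).subset_iUnion_closedBall (mem_image_of_mem f hx)
    obtain ⟨v, hvu, rfl⟩ := (hu ▸ hyM : y ∈ f '' u)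
    exact ⟨v, by simpa using hvu, mem_closedBall.1 hxy⟩

theorem add_one_pow_le_exp_mul_log_add_two {r : ℝ} (hr : 1 / 2 ≤ r) (N : ℕ) :
    (r + 1) ^ N ≤ Real.exp (N * (Real.log r + 2)) := by
  have he : 3 ≤ Real.exp 2 := by linarith [Real.add_one_le_exp (2 : ℝ)]
  rw [Real.exp_nat_mul, Real.exp_add, Real.exp_log (by linarith)]
  exact pow_le_pow_left₀ (by linarith) (by nlinarith) N

theorem covering_lemma_general (d : ℕ) (T : ℝ)
    (Δ : Finset (EuclideanSpace ℝ (Fin d)))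
    (Λ : Set (EuclideanSpace ℝ (Fin d)))
    (n : ℕ) (t : Fin (n + 1) → Set.Icc (0 : ℝ) T)
    (ρ γ η : ℝ) (hη : 0 < η) (hρη : 2 * η < ρ)
    (φ : C(Set.Icc (0 : ℝ) T, EuclideanSpace ℝ (Fin d))) :
    ∃ R : Finset C(Set.Icc (0 : ℝ) T, EuclideanSpace ℝ (Fin d)),
      (∀ ψ ∈ R,
        (∀ s u : Set.Icc (0 : ℝ) T, s ≠ u →
          ((s : ℝ) - (u : ℝ))⁻¹ • (ψ s - ψ u) ∈
            convexHull ℝ (Δ : Set (EuclideanSpace ℝ (Fin d)))) ∧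
        (∀ s : Set.Icc (0 : ℝ) T, dist (ψ s) (φ s) ≤ ρ) ∧
        (∀ s : Set.Icc (0 : ℝ) T, ∀ y ∉ Λ, γ ≤ dist (ψ s) y)) ∧
      ((R.card : ℝ) ≤ Real.exp (d * (n + 1) * (Real.log (ρ / η) + 2))) ∧
      ∀ ψ' : C(Set.Icc (0 : ℝ) T, EuclideanSpace ℝ (Fin d)),
        ((∀ s u : Set.Icc (0 : ℝ) T, s ≠ u →
            ((s : ℝ) - (u : ℝ))⁻¹ • (ψ' s - ψ' u) ∈
              convexHull ℝ (Δ : Set (EuclideanSpace ℝ (Fin d)))) ∧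
          (∀ s : Set.Icc (0 : ℝ) T, dist (ψ' s) (φ s) ≤ ρ) ∧
          (∀ s : Set.Icc (0 : ℝ) T, ∀ y ∉ Λ, γ ≤ dist (ψ' s) y)) →
        ∃ ψ ∈ R, ∀ i : Fin (n + 1), dist (ψ' (t i)) (ψ (t i)) ≤ 2 * η := by
  lift η to ℝ≥0 using hη.le
  let ev (ψ : C(Set.Icc (0 : ℝ) T, EuclideanSpace ℝ (Fin d))) :
      Fin (n + 1) → EuclideanSpace ℝ (Fin d) := fun i => ψ (t i)
  set S := {ψ : C(Set.Icc (0 : ℝ) T, EuclideanSpace ℝ (Fin d)) |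
    (∀ s u : Set.Icc (0 : ℝ) T, s ≠ u →
      ((s : ℝ) - (u : ℝ))⁻¹ • (ψ s - ψ u) ∈ convexHull ℝ (Δ : Set (EuclideanSpace ℝ (Fin d)))) ∧
    (∀ s : Set.Icc (0 : ℝ) T, dist (ψ s) (φ s) ≤ ρ) ∧
    (∀ s : Set.Icc (0 : ℝ) T, ∀ y ∉ Λ, γ ≤ dist (ψ s) y)}
  have hρ : 0 ≤ ρ := by linarith [η.2]
  have hSball : ev '' S ⊆ closedBall (ev φ) ρ := by
    rintro _ ⟨ψ, hψ, rfl⟩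
    exact (dist_pi_le_iff hρ).2 fun i => hψ.2.1 (t i)
  have hpack := packingNumber_le_of_subset_closedBall hρ hη hSball
  obtain ⟨R, hRS, hRcard, hRcover⟩ :=
    exists_finset_subset_dist_le_of_packingNumber_image_ne_top ev S
      (hpack.trans_lt (ENat.natCast_lt_top _)).ne
  refine ⟨R, fun ψ hψ => hRS hψ, ?_, fun ψ' hψ' => ?_⟩
  · have hdim : finrank ℝ (Fin (n + 1) → EuclideanSpace ℝ (Fin d)) = d * (n + 1) := by
      rw [finrank_pi_fintype]; simp [mul_comm]
    calc (R.card : ℝ) ≤ ⌊((ρ + η) / η) ^ (d * (n + 1))⌋₊ := by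
          rw [← hdim]; exact_mod_cast hRcard.trans hpack
      _ ≤ (ρ / η + 1) ^ (d * (n + 1)) := by
          rw [add_div, div_self hη.ne']; exact Nat.floor_le (by positivity)
      _ ≤ _ := by
          convert add_one_pow_le_exp_mul_log_add_two _ (d * (n + 1)) using 2
          · push_cast; ring
          · rw [le_div_iff₀ hη]; linarith
  · obtain ⟨ψ, hψR, hdist⟩ := hRcover ψ' hψ'
    push_cast at hdist
    exact ⟨ψ, hψR, fun i => (dist_le_pi_dist (ev ψ') (ev ψ) i).trans hdist⟩

/-- Covering lemma: For every γ ≥ 0, every η > 0 with ρ > 2η, and every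
φ ∈ E([0,T]), there is a finite set R ⊆ B̄_{ρ,γ}(φ) of cardinality at most
exp(d(n+1)(log(ρ/η) + 2)) such that every ψ′ ∈ B̄_{ρ,γ}(φ) is within 2η of some ψ ∈ R
at all partition times t₀,…,t_n.  Here E([0,T]) is the set of continuous paths whose
difference quotients lie in D = conv Δ, and B̄_{ρ,γ}(φ) is the set of ψ ∈ E([0,T])
with sup-distance ≤ ρ from φ whose values stay at distance ≥ γ from ℝ^d ∖ Λ. -/
theorem covering_lemma (d : ℕ) (hd : 1 ≤ d) (T : ℝ) (hT : 0 < T)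
    (Δ : Finset (EuclideanSpace ℝ (Fin d))) (hΔ : Δ.Nonempty)
    (Λ : Set (EuclideanSpace ℝ (Fin d)))
    (n : ℕ) (t : Fin (n + 1) → Set.Icc (0 : ℝ) T)
    (hmono : StrictMono t) (h0 : (t 0 : ℝ) = 0) (hlast : (t (Fin.last n) : ℝ) = T)
    (ρ γ η : ℝ) (hγ : 0 ≤ γ) (hη : 0 < η) (hρη : 2 * η < ρ)
    (φ : C(Set.Icc (0 : ℝ) T, EuclideanSpace ℝ (Fin d)))
    (hφ : ∀ s u : Set.Icc (0 : ℝ) T, s ≠ u →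
      ((s : ℝ) - (u : ℝ))⁻¹ • (φ s - φ u) ∈
        convexHull ℝ (Δ : Set (EuclideanSpace ℝ (Fin d)))) :
    ∃ R : Finset C(Set.Icc (0 : ℝ) T, EuclideanSpace ℝ (Fin d)),
      (∀ ψ ∈ R,
        (∀ s u : Set.Icc (0 : ℝ) T, s ≠ u →
          ((s : ℝ) - (u : ℝ))⁻¹ • (ψ s - ψ u) ∈
            convexHull ℝ (Δ : Set (EuclideanSpace ℝ (Fin d)))) ∧
        (∀ s : Set.Icc (0 : ℝ) T, dist (ψ s) (φ s) ≤ ρ) ∧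
        (∀ s : Set.Icc (0 : ℝ) T, ∀ y ∉ Λ, γ ≤ dist (ψ s) y)) ∧
      ((R.card : ℝ) ≤ Real.exp (d * (n + 1) * (Real.log (ρ / η) + 2))) ∧
      ∀ ψ' : C(Set.Icc (0 : ℝ) T, EuclideanSpace ℝ (Fin d)),
        ((∀ s u : Set.Icc (0 : ℝ) T, s ≠ u →
            ((s : ℝ) - (u : ℝ))⁻¹ • (ψ' s - ψ' u) ∈
              convexHull ℝ (Δ : Set (EuclideanSpace ℝ (Fin d)))) ∧
          (∀ s : Set.Icc (0 : ℝ) T, dist (ψ' s) (φ s) ≤ ρ) ∧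
          (∀ s : Set.Icc (0 : ℝ) T, ∀ y ∉ Λ, γ ≤ dist (ψ' s) y)) →
        ∃ ψ ∈ R, ∀ i : Fin (n + 1), dist (ψ' (t i)) (ψ (t i)) ≤ 2 * η :=
  covering_lemma_general d T Δ Λ n t ρ γ η hη hρη φ
end

section
/- A continuous path has all its difference quotients in D if and only if it is absolutely continuous with almost-every derivative in D: for a continuous φ : [0,T] → ℝ^d, the condition (φ(t) − φ(t′))/(t − t′) ∈ D for all t ≠ t′ in [0,T] holds if and only if there exists a Lebesgue-integrable g : [0,T] → ℝ^d with φ(t) = φ(0) + ∫₀ᵗ g(s) ds for all t ∈ [0,T] and g(s) ∈ D for Lebesgue-a.e. s ∈ [0,T]. -/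
/-!
Between two points, the difference quotient of `φ(t) = φ(0) + ∫₀ᵗ g` is the average of `g`, which
lies in the closed convex set `D` when `g` does a.e. Conversely, slopes in the bounded set `D` make
`φ` Lipschitz; clamping it to `[0,T]` gives a Lipschitz function on `ℝ`, differentiable a.e. by
Rademacher's theorem with derivative a limit of slopes, hence in the closed set `D`, and a Lipschitz
function is absolutely continuous, so it is the integral of its derivative.
-/

open MeasureTheory Set Filter Topology Metric
open scoped NNReal Interval

theorem HasDerivAt.mem_of_eventually_slope_mem {𝕜 E : Type*} [NontriviallyNormedField 𝕜]
    [NormedAddCommGroup E] [NormedSpace 𝕜 E] {f : 𝕜 → E} {f' : E} {x : 𝕜} {D : Set E}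
    (hD : IsClosed D) (hf : HasDerivAt f f' x) (h : ∀ᶠ y in 𝓝[≠] x, slope f x y ∈ D) : f' ∈ D :=
  hD.mem_of_tendsto (hasDerivAt_iff_tendsto_slope.mp hf) h

section Calculus

variable {E : Type*} [NormedAddCommGroup E] [NormedSpace ℝ E]

theorem lipschitzOnWith_of_slope_mem_closedBall {f : ℝ → E} {s : Set ℝ} {K : ℝ≥0}
    (h : ∀ x ∈ s, ∀ y ∈ s, x ≠ y → slope f x y ∈ closedBall 0 K) : LipschitzOnWith K f s := by
  refine LipschitzOnWith.of_dist_le_mul fun y hy x hx => ?_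
  rcases eq_or_ne x y with rfl | hne
  · simp
  have hslope := mem_closedBall_zero_iff.mp (h x hx y hy hne)
  rw [slope_def_module, norm_smul, norm_inv, ← dist_eq_norm, ← dist_eq_norm,
    inv_mul_le_iff₀ (dist_pos.mpr hne.symm)] at hslope
  rwa [mul_comm] at hslope

theorem LipschitzOnWith.lipschitzWith_IccExtend {α : Type*} [PseudoEMetricSpace α]
    {f : ℝ → α} {K : ℝ≥0} {a b : ℝ} (hab : a ≤ b) (hf : LipschitzOnWith K f (Icc a b)) :
    LipschitzWith K (IccExtend hab ((Icc a b).domRestrict f)) := by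
  simpa only [IccExtend, mul_one] using hf.to_restrict.comp (LipschitzWith.projIcc hab)

theorem lipschitzWith_intervalIntegral_of_norm_le {g : ℝ → E} {K : ℝ≥0}
    (hg : LocallyIntegrable g volume) (hK : ∀ x, ‖g x‖ ≤ K) (a : ℝ) :
    LipschitzWith K fun x => ∫ t in a..x, g t := by
  have hint (x y : ℝ) : IntervalIntegrable g volume x y :=
    (hg.integrableOn_isCompact isCompact_uIcc).intervalIntegrable
  refine LipschitzWith.of_dist_le_mul fun x y => ?_
  rw [dist_eq_norm, intervalIntegral.integral_interval_sub_left (hint a x) (hint a y),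
    Real.dist_eq]
  exact intervalIntegral.norm_integral_le_of_norm_le_const fun t _ => hK t

variable [CompleteSpace E]

theorem LipschitzWith.locallyIntegrable_deriv {f : ℝ → E} {K : ℝ≥0} (hf : LipschitzWith K f) :
    LocallyIntegrable (deriv f) volume :=
  (memLp_top_of_bound (aestronglyMeasurable_deriv f volume) K
    (ae_of_all _ fun _ => norm_deriv_le_of_lipschitz hf)).locallyIntegrable le_top

theorem LipschitzWith.integral_deriv_eq_sub [FiniteDimensional ℝ E] {f : ℝ → E} {K : ℝ≥0}
    (hf : LipschitzWith K f) (a b : ℝ) : ∫ x in a..b, deriv f x = f b - f a := by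
  set F : ℝ → E := fun x => ∫ t in a..x, deriv f t
  have hFlip : LipschitzWith K F := lipschitzWith_intervalIntegral_of_norm_le
    hf.locallyIntegrable_deriv (fun _ => norm_deriv_le_of_lipschitz hf) a
  have hderiv : ∀ᵐ x, x ∈ [[a, b]] → HasDerivAt (f - F) 0 x := by
    filter_upwards [hf.ae_differentiableAt,
      LocallyIntegrable.ae_hasDerivAt_integral hf.locallyIntegrable_deriv] with x hfx hFx _
    simpa using hfx.hasDerivAt.sub (hFx a)
  obtain ⟨C, hC⟩ := ((hf.sub hFlip).lipschitzOnWith.absolutelyContinuousOnInterval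
    (a := a) (b := b)).const_of_ae_hasDerivAt_zero hderiv
  have hab := (hC b right_mem_uIcc).trans (hC a left_mem_uIcc).symm
  simp only [F, intervalIntegral.integral_same, sub_zero] at hab
  rw [← hab, sub_sub_cancel]

end Calculus

section Slopes

variable {E : Type*} [NormedAddCommGroup E] [NormedSpace ℝ E] [CompleteSpace E]

theorem Convex.interval_average_mem {D : Set E} (hconv : Convex ℝ D) (hclosed : IsClosed D)
    {g : ℝ → E} {a b : ℝ} (hab : a ≠ b) (hg : IntegrableOn g (Ι a b))
    (hD : ∀ᵐ t ∂volume.restrict (Ι a b), g t ∈ D) : (⨍ t in a..b, g t) ∈ D := by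
  refine hconv.set_average_mem hclosed ?_ (by simp [Real.volume_uIoc]) hD hg
  simpa [Real.volume_uIoc, sub_eq_zero] using hab.symm

theorem slope_mem_of_eq_add_integral {D : Set E} (hconv : Convex ℝ D) (hclosed : IsClosed D)
    {φ g : ℝ → E} {a b : ℝ} (hg : IntegrableOn g (Icc a b))
    (hφ : ∀ s ∈ Icc a b, φ s = φ a + ∫ r in a..s, g r)
    (hD : ∀ᵐ s ∂volume.restrict (Icc a b), g s ∈ D) {u s : ℝ} (hu : u ∈ Icc a b)
    (hs : s ∈ Icc a b) (hus : u ≠ s) : slope φ u s ∈ D := by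
  have hsub : Ι u s ⊆ Icc a b := uIoc_subset_uIcc.trans (uIcc_subset_Icc hu hs)
  have hint {t : ℝ} (ht : t ∈ Icc a b) : IntervalIntegrable g volume a t :=
    (hg.mono_set (uIcc_subset_Icc (left_mem_Icc.2 (hu.1.trans hu.2)) ht)).intervalIntegrable
  have hslope : slope φ u s = ⨍ t in u..s, g t := by
    rw [interval_average_eq, slope_def_module, hφ s hs, hφ u hu, add_sub_add_left_eq_sub,
      intervalIntegral.integral_interval_sub_left (hint hs) (hint hu)]
  rw [hslope]
  exact hconv.interval_average_mem hclosed hus (hg.mono_set hsub)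
    (ae_restrict_of_ae_restrict_of_subset hsub hD)

theorem exists_eq_add_integral_of_slope_mem [FiniteDimensional ℝ E] {D : Set E}
    (hclosed : IsClosed D) {K : ℝ≥0} (hK : D ⊆ closedBall 0 K) {φ : ℝ → E} {a b : ℝ}
    (hab : a ≤ b) (hφ : ∀ u ∈ Icc a b, ∀ s ∈ Icc a b, u ≠ s → slope φ u s ∈ D) :
    ∃ g : ℝ → E, IntegrableOn g (Icc a b) ∧ (∀ s ∈ Icc a b, φ s = φ a + ∫ r in a..s, g r) ∧
      ∀ᵐ s ∂volume.restrict (Icc a b), g s ∈ D := by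
  set ψ := IccExtend hab ((Icc a b).domRestrict φ)
  have hψφ : EqOn ψ φ (Icc a b) := fun s hs => IccExtend_of_mem hab _ hs
  have hψ : LipschitzWith K ψ := (lipschitzOnWith_of_slope_mem_closedBall
    fun u hu s hs hus => hK (hφ u hu s hs hus)).lipschitzWith_IccExtend hab
  refine ⟨deriv ψ, hψ.locallyIntegrable_deriv.integrableOn_isCompact isCompact_Icc,
    fun s hs => ?_, ?_⟩
  · rw [hψ.integral_deriv_eq_sub, ← hψφ hs, ← hψφ (left_mem_Icc.2 hab)]
    abel
  · rw [← restrict_Ioo_eq_restrict_Icc]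
    filter_upwards [ae_restrict_mem measurableSet_Ioo,
      ae_restrict_of_ae hψ.ae_differentiableAt] with s hs hψs
    refine hψs.hasDerivAt.mem_of_eventually_slope_mem hclosed ?_
    filter_upwards [nhdsWithin_le_nhds (Icc_mem_nhds hs.1 hs.2), self_mem_nhdsWithin]
      with t ht (hts : t ≠ s)
    rw [slope_def_module, hψφ ht, hψφ (Ioo_subset_Icc_self hs), ← slope_def_module]
    exact hφ s (Ioo_subset_Icc_self hs) t ht hts.symm

end Slopes

theorem difference_quotients_iff_absolutely_continuous_general
    (d : ℕ) (T : ℝ) (hT : 0 < T)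
    (Δ : Finset (EuclideanSpace ℝ (Fin d)))
    (φ : ℝ → EuclideanSpace ℝ (Fin d)) :
    (∀ s ∈ Set.Icc (0 : ℝ) T, ∀ u ∈ Set.Icc (0 : ℝ) T, s ≠ u →
        (s - u)⁻¹ • (φ s - φ u) ∈
          convexHull ℝ (Δ : Set (EuclideanSpace ℝ (Fin d)))) ↔
      ∃ g : ℝ → EuclideanSpace ℝ (Fin d),
        IntegrableOn g (Set.Icc (0 : ℝ) T) volume ∧
        (∀ s ∈ Set.Icc (0 : ℝ) T, φ s = φ 0 + ∫ r in (0 : ℝ)..s, g r) ∧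
        (∀ᵐ s ∂(volume.restrict (Set.Icc (0 : ℝ) T)),
          g s ∈ convexHull ℝ (Δ : Set (EuclideanSpace ℝ (Fin d)))) := by
  have hcompact : IsCompact (convexHull ℝ (Δ : Set (EuclideanSpace ℝ (Fin d)))) :=
    Δ.finite_toSet.isCompact_convexHull ℝ
  obtain ⟨K, hK⟩ := hcompact.isBounded.subset_closedBall 0
  simp_rw [← slope_def_module φ]
  constructor
  · intro h
    exact exists_eq_add_integral_of_slope_mem hcompact.isClosed
      (hK.trans (closedBall_subset_closedBall K.le_coe_toNNReal)) hT.le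
      fun u hu s hs hus => h s hs u hu hus.symm
  · rintro ⟨g, hg, hφg, hD⟩ s hs u hu hsu
    exact slope_mem_of_eq_add_integral (convex_convexHull ℝ _) hcompact.isClosed hg hφg hD
      hu hs hsu.symm

/-- A continuous path has all its difference quotients in D = conv Δ if
and only if it is absolutely continuous with almost-every derivative in D: for a
continuous φ : [0,T] → ℝ^d, the difference quotient condition holds iff there is a
Lebesgue-integrable g with φ(t) = φ(0) + ∫₀ᵗ g(s) ds on [0,T] and g(s) ∈ D for a.e.
s ∈ [0,T]. -/
theorem difference_quotients_iff_absolutely_continuous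
    (d : ℕ) (hd : 1 ≤ d) (T : ℝ) (hT : 0 < T)
    (Δ : Finset (EuclideanSpace ℝ (Fin d))) (hΔ : Δ.Nonempty)
    (φ : ℝ → EuclideanSpace ℝ (Fin d)) (hφ : ContinuousOn φ (Set.Icc 0 T)) :
    (∀ s ∈ Set.Icc (0 : ℝ) T, ∀ u ∈ Set.Icc (0 : ℝ) T, s ≠ u →
        (s - u)⁻¹ • (φ s - φ u) ∈
          convexHull ℝ (Δ : Set (EuclideanSpace ℝ (Fin d)))) ↔
      ∃ g : ℝ → EuclideanSpace ℝ (Fin d),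
        IntegrableOn g (Set.Icc (0 : ℝ) T) volume ∧
        (∀ s ∈ Set.Icc (0 : ℝ) T, φ s = φ 0 + ∫ r in (0 : ℝ)..s, g r) ∧
        (∀ᵐ s ∂(volume.restrict (Set.Icc (0 : ℝ) T)),
          g s ∈ convexHull ℝ (Δ : Set (EuclideanSpace ℝ (Fin d)))) :=
  difference_quotients_iff_absolutely_continuous_general d T hT Δ φ
end
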